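/- Let U and V be positive random variables with U/V ≤ M almost surely for a constant M > 0. Suppose there exists an event D with probability at least 1 − α on which |U − E[U]| ≤ ε·E[U] and |V − E[V]| ≤ ε·E[V] for some 0 ≤ ε < 1. Then E[|U/V − E[U]/E[V]|²] ≤ (4ε²/(1−ε)²)·(E[U]/E[V])² + (max(M, E[U]/E[V]))²·α. -/

import Mathlib

/-!
On `D` both `U` and `V` are within relative error `ε` of their means, so the ratio `U/V` is
within relative error `2ε/(1-ε)` of `E[U]/E[V]`. Off `D`, both `U/V` and `E[U]/E[V]` lie in
`[0, max M (E[U]/E[V])]`, so their distance is at most that maximum. Integrating the resulting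
two-valued bound on the squared error, the second value is paid only on `Dᶜ`, of probability at
most `α`.
-/

open MeasureTheory

theorem abs_div_sub_div_le_of_abs_sub_le {u v a b ε : ℝ} (hu : 0 < u) (hv : 0 < v)
    (hε0 : 0 ≤ ε) (hε1 : ε < 1) (ha : |u - a| ≤ ε * a) (hb : |v - b| ≤ ε * b) :
    |u / v - a / b| ≤ 2 * ε / (1 - ε) * (a / b) := by
  obtain ⟨ha₁, ha₂⟩ := abs_le.1 ha
  obtain ⟨hb₁, hb₂⟩ := abs_le.1 hb
  have ha0 : 0 < a := by nlinarith
  have hb0 : 0 < b := by nlinarith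
  have hv_lower : (1 - ε) * b ≤ v := by linarith
  have hnum : |u * b - v * a| ≤ 2 * ε * a * b :=
    calc |u * b - v * a| = |(u - a) * b - (v - b) * a| := by congr 1; ring
      _ ≤ |u - a| * b + |v - b| * a := by
        simpa only [abs_mul, abs_of_pos ha0, abs_of_pos hb0] using
          abs_sub ((u - a) * b) ((v - b) * a)
      _ ≤ ε * a * b + ε * b * a := by gcongr
      _ = 2 * ε * a * b := by ring
  calc |u / v - a / b| = |u * b - v * a| / (v * b) := by
        rw [div_sub_div _ _ hv.ne' hb0.ne', abs_div, abs_of_pos (mul_pos hv hb0)]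
    _ ≤ 2 * ε * a * b / ((1 - ε) * b * b) := by gcongr
    _ = 2 * ε / (1 - ε) * (a / b) := by
        field_simp [(sub_pos.2 hε1).ne']

theorem integral_le_of_le_on_of_ae_le {Ω : Type*} [MeasurableSpace Ω] {μ : Measure Ω}
    [IsFiniteMeasure μ] {f : Ω → ℝ} {s : Set Ω} (hs : MeasurableSet s) {a b : ℝ}
    (hf : 0 ≤ᵐ[μ] f) (hfs : ∀ ω ∈ s, f ω ≤ a) (hfb : ∀ᵐ ω ∂μ, f ω ≤ b) :
    ∫ ω, f ω ∂μ ≤ a * μ.real s + b * μ.real sᶜ := by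
  classical
  calc ∫ ω, f ω ∂μ ≤ ∫ ω, s.piecewise (fun _ ↦ a) (fun _ ↦ b) ω ∂μ := by
        refine integral_mono_of_nonneg hf ?_ ?_
        · exact Integrable.piecewise hs (integrable_const a).integrableOn
            (integrable_const b).integrableOn
        · filter_upwards [hfb] with ω hω
          by_cases hωs : ω ∈ s
          · simpa [hωs] using hfs ω hωs
          · simpa [hωs] using hω
    _ = a * μ.real s + b * μ.real sᶜ := by
        rw [integral_piecewise hs (integrable_const a).integrableOn
          (integrable_const b).integrableOn, setIntegral_const, setIntegral_const,
          smul_eq_mul, smul_eq_mul, mul_comm a, mul_comm b]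

theorem stmt_0_general {Ω : Type*} [MeasurableSpace Ω] (μ : Measure Ω) [IsProbabilityMeasure μ]
    (U V : Ω → ℝ) (M α ε : ℝ)
    (hU : ∀ ω, 0 < U ω) (hV : ∀ ω, 0 < V ω)
    (hUV : ∀ᵐ ω ∂μ, U ω / V ω ≤ M)
    (hε0 : 0 ≤ ε) (hε1 : ε < 1)
    (D : Set Ω) (hDm : MeasurableSet D) (hDα : (1 : ℝ) - α ≤ (μ D).toReal)
    (hDU : ∀ ω ∈ D, |U ω - ∫ ω', U ω' ∂μ| ≤ ε * ∫ ω', U ω' ∂μ)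
    (hDV : ∀ ω ∈ D, |V ω - ∫ ω', V ω' ∂μ| ≤ ε * ∫ ω', V ω' ∂μ) :
    ∫ ω, |U ω / V ω - (∫ ω', U ω' ∂μ) / (∫ ω', V ω' ∂μ)| ^ 2 ∂μ ≤
      4 * ε ^ 2 / (1 - ε) ^ 2 * ((∫ ω', U ω' ∂μ) / (∫ ω', V ω' ∂μ)) ^ 2 +
        (max M ((∫ ω', U ω' ∂μ) / (∫ ω', V ω' ∂μ))) ^ 2 * α := by
  set R := (∫ ω', U ω' ∂μ) / (∫ ω', V ω' ∂μ)
  have hR : 0 ≤ R := div_nonneg (integral_nonneg fun ω ↦ (hU ω).le)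
    (integral_nonneg fun ω ↦ (hV ω).le)
  have h_on_D : ∀ ω ∈ D, |U ω / V ω - R| ^ 2 ≤ 4 * ε ^ 2 / (1 - ε) ^ 2 * R ^ 2 := by
    intro ω hω
    calc |U ω / V ω - R| ^ 2 ≤ (2 * ε / (1 - ε) * R) ^ 2 := by
          gcongr
          exact abs_div_sub_div_le_of_abs_sub_le (hU ω) (hV ω) hε0 hε1 (hDU ω hω) (hDV ω hω)
      _ = 4 * ε ^ 2 / (1 - ε) ^ 2 * R ^ 2 := by rw [mul_pow, div_pow]; ring
  have h_ae : ∀ᵐ ω ∂μ, |U ω / V ω - R| ^ 2 ≤ max M R ^ 2 := by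
    filter_upwards [hUV] with ω hω
    gcongr
    exact abs_sub_le_of_nonneg_of_le (div_pos (hU ω) (hV ω)).le (hω.trans (le_max_left _ _))
      hR (le_max_right _ _)
  have hDc : μ.real Dᶜ ≤ α := by
    rw [probReal_compl_eq_one_sub hDm]
    linarith [measureReal_def (μ := μ) D]
  have hD1 : μ.real D ≤ 1 := measureReal_le_one
  calc _ ≤ 4 * ε ^ 2 / (1 - ε) ^ 2 * R ^ 2 * μ.real D + max M R ^ 2 * μ.real Dᶜ :=
        integral_le_of_le_on_of_ae_le hDm (ae_of_all _ fun ω ↦ by positivity) h_on_D h_ae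
    _ ≤ 4 * ε ^ 2 / (1 - ε) ^ 2 * R ^ 2 * 1 + max M R ^ 2 * α := by gcongr
    _ = _ := by ring

/-- Lemma 1 of the paper: if `U/V ≤ M` a.s. and, on an event `D` of probability at least
`1 - α`, both `U` and `V` are within relative error `ε` of their means, then the mean
squared error of `U/V` around `E[U]/E[V]` is bounded by
`4ε²/(1-ε)² (E[U]/E[V])² + (max M (E[U]/E[V]))² α`. -/
theorem stmt_0 {Ω : Type*} [MeasurableSpace Ω] (μ : Measure Ω) [IsProbabilityMeasure μ]
    (U V : Ω → ℝ) (M α ε : ℝ) (hM : 0 < M)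
    (hU : ∀ ω, 0 < U ω) (hV : ∀ ω, 0 < V ω)
    (hUV : ∀ᵐ ω ∂μ, U ω / V ω ≤ M)
    (hUint : Integrable U μ) (hVint : Integrable V μ)
    (hInt : Integrable (fun ω => |U ω / V ω - (∫ ω, U ω ∂μ) / (∫ ω, V ω ∂μ)| ^ 2) μ)
    (hε0 : 0 ≤ ε) (hε1 : ε < 1)
    (D : Set Ω) (hDm : MeasurableSet D) (hDα : (1 : ℝ) - α ≤ (μ D).toReal)
    (hDU : ∀ ω ∈ D, |U ω - ∫ ω', U ω' ∂μ| ≤ ε * ∫ ω', U ω' ∂μ)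
    (hDV : ∀ ω ∈ D, |V ω - ∫ ω', V ω' ∂μ| ≤ ε * ∫ ω', V ω' ∂μ) :
    ∫ ω, |U ω / V ω - (∫ ω', U ω' ∂μ) / (∫ ω', V ω' ∂μ)| ^ 2 ∂μ ≤
      4 * ε ^ 2 / (1 - ε) ^ 2 * ((∫ ω', U ω' ∂μ) / (∫ ω', V ω' ∂μ)) ^ 2 +
        (max M ((∫ ω', U ω' ∂μ) / (∫ ω', V ω' ∂μ))) ^ 2 * α :=
  stmt_0_general μ U V M α ε hU hV hUV hε0 hε1 D hDm hDα hDU hDV
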